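/- arXiv:2012.10933 — 5 statements merged into one kernel-verified Lean document; each statement's English description precedes it below -/
import Mathlib

section
/- Let G be a connected self-centered simple graph, i.e., rad(G) = diam(G) = d, with d ≥ 2. Then the eccentricity matrix ε(G) has at least two positive eigenvalues. In particular, no self-centered graph of diameter at least 2 has exactly one positive ε-eigenvalue. -/
open Finset Polynomial

noncomputable def ecc {V : Type*} [Fintype V] (G : SimpleGraph V) (u : V) : ℕ :=
  Finset.univ.sup (G.dist u)

noncomputable def eccMatrix {V : Type*} [Fintype V] (G : SimpleGraph V) :
    Matrix V V ℝ := fun u v =>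
  if G.dist u v = min (ecc G u) (ecc G v) then (G.dist u v : ℝ) else 0

theorem eccMatrix_isHermitian {V : Type*} [Fintype V] (G : SimpleGraph V) :
    (eccMatrix G).IsHermitian := by
  unfold Matrix.IsHermitian
  ext u v
  simp only [Matrix.conjTranspose_apply, eccMatrix, star_trivial]
  rw [SimpleGraph.dist_comm, min_comm]

/-- Number of positive eigenvalues (with multiplicity) of a real symmetric matrix. -/
noncomputable def posEigCount {V : Type*} [Fintype V] [DecidableEq V]
    {A : Matrix V V ℝ} (hA : A.IsHermitian) : ℕ :=
  (Finset.univ.filter fun i => 0 < hA.eigenvalues i).card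

/-- The join of two simple graphs: disjoint union plus all edges in between. -/
def graphJoin {α β : Type*} (G : SimpleGraph α) (H : SimpleGraph β) :
    SimpleGraph (α ⊕ β) where
  Adj x y := match x, y with
    | Sum.inl a, Sum.inl b => G.Adj a b
    | Sum.inr a, Sum.inr b => H.Adj a b
    | _, _ => True
  symm := ⟨by rintro (a|a) (b|b) h <;> first | exact G.adj_symm h | exact H.adj_symm h | trivial⟩
  loopless := ⟨by rintro (a|a) h <;> first | exact G.irrefl h | exact H.irrefl h⟩

/-- The disjoint union of two simple graphs. -/
def graphSum {α β : Type*} (G : SimpleGraph α) (H : SimpleGraph β) :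
    SimpleGraph (α ⊕ β) where
  Adj x y := match x, y with
    | Sum.inl a, Sum.inl b => G.Adj a b
    | Sum.inr a, Sum.inr b => H.Adj a b
    | _, _ => False
  symm := ⟨by rintro (a|a) (b|b) h <;> first | exact G.adj_symm h | exact H.adj_symm h | trivial⟩
  loopless := ⟨by rintro (a|a) h <;> first | exact G.irrefl h | exact H.irrefl h⟩

/-- Disjoint union of blocks indexed by `ι`; block `i` has `r i` vertices and is a
clique when `P i` holds and a coclique (independent set) otherwise. -/
def blocksGraph {ι : Type*} (r : ι → ℕ) (P : ι → Prop) :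
    SimpleGraph (Σ i, Fin (r i)) where
  Adj x y := x ≠ y ∧ x.1 = y.1 ∧ P x.1
  symm := ⟨by rintro x y ⟨h1, h2, h3⟩; exact ⟨h1.symm, h2.symm, h2 ▸ h3⟩⟩
  loopless := ⟨fun x h => h.1 rfl⟩

/-!
For a self-centered graph of eccentricity `d`, `ε(G)` is `d` times the adjacency matrix of the
distance-`d` graph. Pick `a, c` at distance `d`, let `b` be the neighbour of `a` on a geodesic
to `c` and `w` a vertex at distance `d` from `b`. Then `ε(G)` has entries `d` at `ac` and `bw`
and `0` at `ab` and `cb` (as `d ≥ 2`), which makes its quadratic form positive definite on the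
span of `e a + e c` and `2 e b + e w`. By the spectral theorem, a subspace on which the form is
positive definite has dimension at most the number of positive eigenvalues.
-/

open Matrix

namespace Matrix.IsHermitian

variable {n : Type*} [Fintype n] [DecidableEq n] {A : Matrix n n ℝ} (hA : A.IsHermitian)

lemma dotProduct_mulVec_eq_sum_eigenvalues (z : n → ℝ) :
    z ⬝ᵥ A *ᵥ z =
      ∑ i, hA.eigenvalues i * ((star (hA.eigenvectorUnitary : Matrix n n ℝ) *ᵥ z) i) ^ 2 := by
  set U := (hA.eigenvectorUnitary : Matrix n n ℝ)
  conv_lhs => rw [hA.spectral_theorem, Unitary.conjStarAlgAut_apply]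
  rw [← mulVec_mulVec, ← mulVec_mulVec, dotProduct_mulVec]
  have hzU : z ᵥ* U = star U *ᵥ z := by
    rw [star_eq_conjTranspose, conjTranspose_eq_transpose_of_trivial, mulVec_transpose]
  rw [hzU]
  simp only [mulVec_diagonal, dotProduct, Function.comp_apply, RCLike.ofReal_real_eq_id, id_eq]
  exact Finset.sum_congr rfl fun i _ => by ring

/-- The coordinates of `L e` along the eigenvectors with positive eigenvalue vanish only
for `e = 0`. -/
lemma finrank_le_posEigCount {E : Type*} [AddCommGroup E] [Module ℝ E] [FiniteDimensional ℝ E]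
    (L : E →ₗ[ℝ] n → ℝ) (hL : ∀ e ≠ 0, 0 < L e ⬝ᵥ A *ᵥ L e) :
    Module.finrank ℝ E ≤ posEigCount hA := by
  set U := (hA.eigenvectorUnitary : Matrix n n ℝ) with hU
  set P := Finset.univ.filter fun i => 0 < hA.eigenvalues i
  let coords : E →ₗ[ℝ] P → ℝ :=
    (LinearMap.funLeft ℝ ℝ Subtype.val).comp ((mulVecLin (star U)).comp L)
  have hinj : Function.Injective coords := by
    rw [← LinearMap.ker_eq_bot, LinearMap.ker_eq_bot']
    intro e he
    by_contra hne
    have hzero : ∀ i ∈ P, (star U *ᵥ L e) i = 0 :=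
      fun i hi => congrFun he ⟨i, hi⟩
    have hnonpos : L e ⬝ᵥ A *ᵥ L e ≤ 0 := by
      rw [hA.dotProduct_mulVec_eq_sum_eigenvalues, ← hU]
      refine Finset.sum_nonpos fun i _ => ?_
      by_cases hi : i ∈ P
      · simp [hzero i hi]
      · have : hA.eigenvalues i ≤ 0 := by simpa [P] using hi
        exact mul_nonpos_of_nonpos_of_nonneg this (sq_nonneg _)
    exact (hL e hne).not_ge hnonpos
  simpa [Module.finrank_pi, Fintype.card_subtype, posEigCount, P] using
    LinearMap.finrank_le_finrank_of_injective hinj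

/-- On `α • (e a + e c) + β • (2 • e b + e w)` the form is at least
`2dα² + 4dβ² - 4d|αβ|`, which is positive definite. -/
theorem two_le_posEigCount_of_entries {d : ℝ} (hd : 0 < d)
    (hA_nonneg : ∀ u v, 0 ≤ A u v) (hA_le : ∀ u v, A u v ≤ d) {a b c w : n}
    (hac : A a c = d) (hbw : A b w = d) (hab : A a b = 0) (hcb : A c b = 0) :
    2 ≤ posEigCount hA := by
  have hsymm : ∀ u v, A u v = A v u := fun u v => by simpa using hA.apply v u
  let x : n → ℝ := Pi.single a 1 + Pi.single c 1
  let y : n → ℝ := 2 • Pi.single b 1 + Pi.single w 1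
  let L : ℝ × ℝ →ₗ[ℝ] n → ℝ :=
    (LinearMap.fst ℝ ℝ ℝ).smulRight x + (LinearMap.snd ℝ ℝ ℝ).smulRight y
  have hexpand : ∀ α β : ℝ, L (α, β) ⬝ᵥ A *ᵥ L (α, β) =
      α ^ 2 * (A a a + A c c + 2 * A a c) + β ^ 2 * (4 * A b b + A w w + 4 * A b w)
        + 2 * α * β * (A a w + A c w + 2 * A a b + 2 * A c b) := by
    intro α β
    simp only [L, x, y, LinearMap.add_apply, LinearMap.smulRight_apply, LinearMap.fst_apply,
      LinearMap.snd_apply, mulVec_add, mulVec_smul, dotProduct_add, add_dotProduct,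
      smul_dotProduct, dotProduct_smul, mulVec_single_one, single_dotProduct, col_apply,
      smul_eq_mul, one_mul]
    rw [hsymm c a, hsymm w b, hsymm b a, hsymm b c, hsymm w a, hsymm w c]
    ring
  have := hA.finrank_le_posEigCount L ?_
  · simpa using this
  rintro ⟨α, β⟩ hne
  have hx : 0 ≤ A a a + A c c := add_nonneg (hA_nonneg a a) (hA_nonneg c c)
  have hy : 0 ≤ 4 * A b b + A w w := by linarith [hA_nonneg b b, hA_nonneg w w]
  have hs : 0 ≤ A a w + A c w := add_nonneg (hA_nonneg a w) (hA_nonneg c w)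
  have hs' : A a w + A c w ≤ 2 * d := by linarith [hA_le a w, hA_le c w]
  rw [hexpand, hac, hbw, hab, hcb]
  rcases le_or_gt 0 (α * β) with hαβ | hαβ
  · have hpos : 0 < α ^ 2 + β ^ 2 := by
      have : α ≠ 0 ∨ β ≠ 0 := by
        by_contra! h
        exact hne (by simp [h])
      rcases this with h | h <;> positivity
    nlinarith [mul_nonneg (sq_nonneg α) hx, mul_nonneg (sq_nonneg β) hy, mul_nonneg hαβ hs]
  · -- here `2αβ s ≥ 4dαβ`, and `2α² + 4β² + 4αβ = 2(α + β)² + 2β²`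
    have hβ : 0 < β ^ 2 := by
      have : β ≠ 0 := by rintro rfl; simp at hαβ
      positivity
    nlinarith [mul_pos hd hβ, mul_nonneg (sq_nonneg α) hx, mul_nonneg (sq_nonneg β) hy,
      mul_le_mul_of_nonpos_left hs' hαβ.le, mul_nonneg hd.le (sq_nonneg (α + β))]

end Matrix.IsHermitian

namespace SimpleGraph

variable {V : Type*} {G : SimpleGraph V}

lemma Connected.exists_adj_dist_add_one_eq (hG : G.Connected) {u v : V} (huv : u ≠ v) :
    ∃ w, G.Adj u w ∧ G.dist w v + 1 = G.dist u v := by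
  obtain ⟨p, hp⟩ := hG.exists_walk_length_eq_dist u v
  cases p with
  | nil => exact absurd rfl huv
  | @cons _ w _ huw q =>
    refine ⟨w, huw, le_antisymm ?_ ?_⟩
    · simpa [← hp] using dist_le q
    · have := hG.dist_triangle (u := u) (v := w) (w := v)
      rw [dist_eq_one_iff_adj.mpr huw] at this
      omega

variable [Fintype V]

lemma exists_dist_eq_ecc (G : SimpleGraph V) (u : V) : ∃ v, G.dist u v = ecc G u := by
  obtain ⟨v, -, hv⟩ := Finset.exists_mem_eq_sup _ ⟨u, Finset.mem_univ u⟩ (G.dist u)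
  exact ⟨v, hv.symm⟩

lemma eccMatrix_apply_of_ecc_eq {d : ℕ} (hecc : ∀ u, ecc G u = d) (u v : V) :
    eccMatrix G u v = if G.dist u v = d then (d : ℝ) else 0 := by
  simp only [eccMatrix, hecc, min_self]
  split_ifs with h <;> simp_all

/-- Take `b` next to `a` on a geodesic from `a` to a vertex `c` at distance `d`, and `w` at
distance `d` from `b`. -/
lemma Connected.exists_dist_eq_of_ecc_eq (hG : G.Connected) {d : ℕ} (hd : 2 ≤ d)
    (hecc : ∀ u, ecc G u = d) :
    ∃ a b c w, G.dist a c = d ∧ G.dist b w = d ∧ G.dist a b ≠ d ∧ G.dist c b ≠ d := by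
  obtain ⟨a⟩ := hG.nonempty
  obtain ⟨c, hac⟩ := G.exists_dist_eq_ecc a
  rw [hecc] at hac
  have hne : a ≠ c := by rintro rfl; simp at hac; omega
  obtain ⟨b, hab, hbc⟩ := hG.exists_adj_dist_add_one_eq hne
  obtain ⟨w, hbw⟩ := G.exists_dist_eq_ecc b
  refine ⟨a, b, c, w, hac, hbw.trans (hecc b), ?_, ?_⟩
  · rw [dist_eq_one_iff_adj.mpr hab]; omega
  · rw [dist_comm]; omega

end SimpleGraph

/-- a connected self-centered graph of diameter `d ≥ 2` has at least two
positive eccentricity eigenvalues. -/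
theorem stmt1 {V : Type*} [Fintype V] [DecidableEq V] (G : SimpleGraph V)
    (hconn : G.Connected) (d : ℕ) (hd : 2 ≤ d) (hecc : ∀ u, ecc G u = d) :
    2 ≤ posEigCount (eccMatrix_isHermitian G) := by
  obtain ⟨a, b, c, w, hac, hbw, hab, hcb⟩ := hconn.exists_dist_eq_of_ecc_eq hd hecc
  have hM := SimpleGraph.eccMatrix_apply_of_ecc_eq hecc
  have hd₀ : (0 : ℝ) < d := by exact_mod_cast (by omega : 0 < d)
  refine (eccMatrix_isHermitian G).two_le_posEigCount_of_entries hd₀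
    (fun u v => ?_) (fun u v => ?_) (a := a) (b := b) (c := c) (w := w) ?_ ?_ ?_ ?_
  · rw [hM]; split_ifs <;> positivity
  · rw [hM]; split_ifs <;> simp [hd₀.le]
  all_goals simp [hM, hac, hbw, hab, hcb]
end

section
/- Let G be a connected simple graph with diam(G) ≥ 3, and let G + u denote the join of G with a single new vertex u (u is adjacent to every vertex of G). Then the eccentricity matrix ε(G + u) has at least two positive eigenvalues. -/
open Finset Polynomial

/-! In `G + u` all distances are at most 2, so two vertices of `G` are at distance 2 there exactly
when they are distinct and non-adjacent in `G`, and then both have eccentricity 2. Since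
`diam G ≥ 3`, `G` has a shortest path `x a b c`; it is induced, so the principal submatrix of
`ε(G + u)` on `x, a, b, c` is twice the adjacency matrix of the complementary path `b x c a`.
Its quadratic form equals `4 (s² + t²)` on `s (e_x + e_c) + t (e_x - e_a + e_b - e_c)`, and a
real symmetric matrix whose quadratic form is positive definite on a `k`-dimensional subspace
has at least `k` positive eigenvalues. -/

open Matrix

namespace Matrix

variable {n m ι : Type*} [Fintype n] [Fintype ι] [DecidableEq n]

theorem card_le_card_pos_of_posDef_transpose_mul_diagonal_mul (d : n → ℝ) (R : Matrix n ι ℝ)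
    (hR : (Rᵀ * diagonal d * R).PosDef) : Fintype.card ι ≤ #{i | 0 < d i} := by
  let φ : (ι → ℝ) →ₗ[ℝ] ({i // 0 < d i} → ℝ) :=
    LinearMap.funLeft ℝ ℝ Subtype.val ∘ₗ R.mulVecLin
  have hφ : Function.Injective φ := by
    refine (injective_iff_map_eq_zero φ).2 fun c hc => ?_
    by_contra hc0
    have hquad : c ⬝ᵥ ((Rᵀ * diagonal d * R) *ᵥ c) = ∑ i, d i * (R *ᵥ c) i ^ 2 := by
      rw [← mulVec_mulVec, ← mulVec_mulVec, dotProduct_mulVec, ← mulVec_transpose,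
        transpose_transpose]
      simp only [dotProduct, mulVec_diagonal]
      exact sum_congr rfl fun i _ => by ring
    have hnonpos : ∑ i, d i * (R *ᵥ c) i ^ 2 ≤ 0 := sum_nonpos fun i _ => by
      by_cases hi : 0 < d i
      · simp [show (R *ᵥ c) i = 0 from congrFun hc ⟨i, hi⟩]
      · exact mul_nonpos_of_nonpos_of_nonneg (not_lt.1 hi) (sq_nonneg _)
    have hpos := hR.dotProduct_mulVec_pos hc0
    rw [star_trivial, hquad] at hpos
    linarith
  simpa [Fintype.card_subtype] using LinearMap.finrank_le_finrank_of_injective hφ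

theorem IsHermitian.card_le_card_eigenvalues_pos {A : Matrix n n ℝ} (hA : A.IsHermitian)
    (P : Matrix n ι ℝ) (hP : (Pᵀ * A * P).PosDef) :
    Fintype.card ι ≤ #{i | 0 < hA.eigenvalues i} := by
  set U : Matrix n n ℝ := (hA.eigenvectorUnitary : Matrix n n ℝ)
  refine card_le_card_pos_of_posDef_transpose_mul_diagonal_mul _ (star U * P) ?_
  have hA' : A = U * diagonal hA.eigenvalues * Uᵀ := by
    conv_lhs => rw [hA.spectral_theorem]
    simp [U, star_eq_conjTranspose]
  convert hP using 1
  calc (star U * P)ᵀ * diagonal hA.eigenvalues * (star U * P)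
      = Pᵀ * (U * diagonal hA.eigenvalues * Uᵀ) * P := by
        simp only [transpose_mul, star_eq_conjTranspose, conjTranspose_eq_transpose_of_trivial,
          transpose_transpose, Matrix.mul_assoc]
    _ = Pᵀ * A * P := by rw [← hA']

theorem IsHermitian.card_le_card_eigenvalues_pos_of_submatrix [Fintype m] {A : Matrix n n ℝ}
    (hA : A.IsHermitian) (g : m → n) (Q : Matrix m ι ℝ)
    (hQ : (Qᵀ * A.submatrix g g * Q).PosDef) :
    Fintype.card ι ≤ #{i | 0 < hA.eigenvalues i} := by
  refine hA.card_le_card_eigenvalues_pos ((1 : Matrix n n ℝ).submatrix id g * Q) ?_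
  have hright : A * (1 : Matrix n n ℝ).submatrix id g = A.submatrix id g :=
    mul_submatrix_one (Equiv.refl n) g A
  have hleft : (1 : Matrix n n ℝ).submatrix g id * A.submatrix id g = A.submatrix g g :=
    one_submatrix_mul g (Equiv.refl n) _
  simp only [transpose_mul, transpose_submatrix, transpose_one, Matrix.mul_assoc]
  rwa [← Matrix.mul_assoc A, hright, ← Matrix.mul_assoc (Matrix.submatrix 1 g id), hleft,
    ← Matrix.mul_assoc]

end Matrix

namespace SimpleGraph

theorem compl_adj_of_two_le_dist {V : Type*} {G : SimpleGraph V} {u v : V}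
    (h : 2 ≤ G.dist u v) : Gᶜ.Adj u v := by
  refine (compl_adj G u v).2 ⟨?_, fun hadj => ?_⟩
  · rintro rfl
    simp at h
  · rw [dist_eq_one_iff_adj.2 hadj] at h
    omega

theorem Reachable.two_le_dist_iff {V : Type*} {G : SimpleGraph V} {u v : V}
    (hr : G.Reachable u v) : 2 ≤ G.dist u v ↔ Gᶜ.Adj u v :=
  ⟨compl_adj_of_two_le_dist, fun h => hr.one_lt_dist_of_ne_of_not_adj h.ne h.2⟩

theorem exists_induced_path_of_three_le_dist {V : Type*} {G : SimpleGraph V} {x y : V}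
    (h : 3 ≤ G.dist x y) :
    ∃ a b c, G.Adj x a ∧ G.Adj a b ∧ G.Adj b c ∧ Gᶜ.Adj x b ∧ Gᶜ.Adj x c ∧ Gᶜ.Adj a c := by
  obtain ⟨p, hp⟩ := exists_walk_of_dist_ne_zero (show G.dist x y ≠ 0 by omega)
  rw [← hp] at h
  rcases p with _ | ⟨hxa, _ | ⟨hab, _ | ⟨hbc, q⟩⟩⟩
  · simp at h
  · simp at h
  · simp at h
  have hxb := length_eq_dist_of_subwalk hp (p₂ := .cons hxa (.cons hab .nil))
    ⟨.nil, .cons hbc q, rfl⟩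
  have hxc := length_eq_dist_of_subwalk hp (p₂ := .cons hxa (.cons hab (.cons hbc .nil)))
    ⟨.nil, q, rfl⟩
  have hac := length_eq_dist_of_subwalk hp (p₂ := .cons hab (.cons hbc .nil))
    ⟨.cons hxa .nil, q, rfl⟩
  simp only [Walk.length_cons, Walk.length_nil] at hxb hxc hac
  exact ⟨_, _, _, hxa, hab, hbc, compl_adj_of_two_le_dist hxb.le,
    compl_adj_of_two_le_dist (by omega), compl_adj_of_two_le_dist hac.le⟩

section graphJoin

variable {α β : Type*} (G : SimpleGraph α) (K : SimpleGraph β) [Nonempty β]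

theorem dist_graphJoin_inl_le_two (v : α) (z : α ⊕ β) : (graphJoin G K).dist (.inl v) z ≤ 2 := by
  obtain ⟨b⟩ := ‹Nonempty β›
  have hvb : (graphJoin G K).Adj (.inl v) (.inr b) := trivial
  rcases z with w | b'
  · have hbw : (graphJoin G K).Adj (.inr b) (.inl w) := trivial
    simpa using dist_le (hvb.toWalk.concat hbw)
  · have hvb' : (graphJoin G K).Adj (.inl v) (.inr b') := trivial
    simp [dist_eq_one_iff_adj.2 hvb']

theorem dist_graphJoin_inl_inl_eq_two_iff {v w : α} :
    (graphJoin G K).dist (.inl v) (.inl w) = 2 ↔ Gᶜ.Adj v w := by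
  obtain ⟨b⟩ := ‹Nonempty β›
  have hvb : (graphJoin G K).Adj (.inl v) (.inr b) := trivial
  have hbw : (graphJoin G K).Adj (.inr b) (.inl w) := trivial
  rw [le_antisymm_iff, and_iff_right (dist_graphJoin_inl_le_two G K v _),
    (hvb.reachable.trans hbw.reachable).two_le_dist_iff]
  simp [compl_adj, graphJoin]

variable [Fintype α] [Fintype β]

theorem ecc_graphJoin_inl_eq_two {v w : α} (h : Gᶜ.Adj v w) :
    ecc (graphJoin G K) (.inl v) = 2 :=
  le_antisymm (Finset.sup_le fun z _ => dist_graphJoin_inl_le_two G K v z)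
    ((dist_graphJoin_inl_inl_eq_two_iff G K).2 h ▸ Finset.le_sup (mem_univ (Sum.inl w)))

open Classical in
theorem eccMatrix_graphJoin_inl_inl {v w : α} (hv : ecc (graphJoin G K) (.inl v) = 2)
    (hw : ecc (graphJoin G K) (.inl w) = 2) :
    eccMatrix (graphJoin G K) (.inl v) (.inl w) = if Gᶜ.Adj v w then 2 else 0 := by
  rw [eccMatrix, hv, hw, min_self]
  by_cases h : Gᶜ.Adj v w
  · simp [h, (dist_graphJoin_inl_inl_eq_two_iff G K).2 h]
  · simp [h, mt (dist_graphJoin_inl_inl_eq_two_iff G K).1 h]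

theorem eccMatrix_graphJoin_submatrix_of_induced_path {x a b c : α} (hxa : G.Adj x a)
    (hab : G.Adj a b) (hbc : G.Adj b c) (hxb : Gᶜ.Adj x b) (hxc : Gᶜ.Adj x c)
    (hac : Gᶜ.Adj a c) :
    (eccMatrix (graphJoin G K)).submatrix (Sum.inl ∘ ![x, a, b, c]) (Sum.inl ∘ ![x, a, b, c]) =
      !![0, 0, 2, 2; 0, 0, 0, 2; 2, 0, 0, 0; 2, 2, 0, 0] := by
  have hecc : ∀ i, ecc (graphJoin G K) (.inl (![x, a, b, c] i)) = 2 := by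
    intro i
    fin_cases i
    exacts [ecc_graphJoin_inl_eq_two G K hxc, ecc_graphJoin_inl_eq_two G K hac,
      ecc_graphJoin_inl_eq_two G K hxb.symm, ecc_graphJoin_inl_eq_two G K hxc.symm]
  ext i j
  rw [submatrix_apply, Function.comp_apply, Function.comp_apply,
    eccMatrix_graphJoin_inl_inl G K (hecc i) (hecc j)]
  fin_cases i <;> fin_cases j <;>
    simp [hxa, hab, hbc, hxb, hxc, hac, hxa.symm, hab.symm, hbc.symm, hxb.symm, hxc.symm,
      hac.symm]

end graphJoin

end SimpleGraph

theorem stmt5_general {V : Type*} [Fintype V] [DecidableEq V] (G : SimpleGraph V)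
    (hdiam : 3 ≤ Finset.univ.sup (ecc G)) :
    2 ≤ posEigCount (eccMatrix_isHermitian (graphJoin G (⊤ : SimpleGraph Unit))) := by
  obtain ⟨x, -, hx⟩ := (Finset.le_sup_iff (by norm_num : (0:ℕ) < 3)).mp hdiam
  obtain ⟨y, -, hxy⟩ := (Finset.le_sup_iff (by norm_num : (0:ℕ) < 3)).mp hx
  obtain ⟨a, b, c, hxa, hab, hbc, hxb, hxc, hac⟩ :=
    SimpleGraph.exists_induced_path_of_three_le_dist hxy
  let M : Matrix (Fin 4) (Fin 4) ℝ := !![0, 0, 2, 2; 0, 0, 0, 2; 2, 0, 0, 0; 2, 2, 0, 0]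
  let Q : Matrix (Fin 4) (Fin 2) ℝ := !![1, 1; 0, -1; 0, 1; 1, -1]
  have hQ : (Qᵀ * M * Q).PosDef := by
    have hgram : Qᵀ * M * Q = diagonal fun _ => 4 := by
      ext i j
      fin_cases i <;> fin_cases j <;> simp [M, Q, Matrix.mul_apply, Fin.sum_univ_four] <;> norm_num
    exact hgram ▸ posDef_diagonal_iff.2 fun _ => by norm_num
  refine (eccMatrix_isHermitian _).card_le_card_eigenvalues_pos_of_submatrix
    (Sum.inl ∘ ![x, a, b, c]) Q ?_
  rwa [SimpleGraph.eccMatrix_graphJoin_submatrix_of_induced_path G ⊤ hxa hab hbc hxb hxc hac]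

/-- if `G` is connected with diameter at least 3, then the join of `G`
with one new vertex has at least two positive eccentricity eigenvalues. -/
theorem stmt5 {V : Type*} [Fintype V] [DecidableEq V] (G : SimpleGraph V)
    (hconn : G.Connected) (hdiam : 3 ≤ Finset.univ.sup (ecc G)) :
    2 ≤ posEigCount (eccMatrix_isHermitian (graphJoin G (⊤ : SimpleGraph Unit))) :=
  stmt5_general G hdiam
end

section
/- Let r₁, r₂ ≥ 2 and let K_{r₁,r₂} be the complete bipartite graph with parts of sizes r₁ and r₂. Then the eccentricity matrix ε(K_{r₁,r₂}) has exactly two positive eigenvalues (namely 2(r₁−1) and 2(r₂−1)), so K_{r₁,r₂} does not have exactly one positive ε-eigenvalue. -/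
open Finset Polynomial

/-!
Since both parts have at least two vertices, every vertex of `K_{r₁,r₂}` has eccentricity 2, so
`ε + 2I` is the block-diagonal matrix `N` with all-`2` blocks. From `N² = D N`, where `D` is
diagonal with entries `2 r₁` and `2 r₂`, every eigenvalue of `N` is `0`, `2 r₁` or `2 r₂`, and the
indicator vectors of the two parts are eigenvectors for the last two. The traces of `N` and `N²`
give `∑ (λ + 2) = 2 r₁ + 2 r₂` and `∑ (λ + 2)² = (2 r₁)² + (2 r₂)²` over the ε-eigenvalues `λ`,
which forces exactly two of the `λ + 2` to be non-zero; these are the positive `λ`.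
-/

open Matrix

namespace Matrix

lemma aeval_diagonal {n R : Type*} [Fintype n] [DecidableEq n] [CommRing R] (d : n → R)
    (p : R[X]) : aeval (diagonal d) p = diagonal fun i => p.eval (d i) := by
  rw [← diagonalAlgHom_apply (R := R), aeval_algHom_apply, aeval_pi_apply]
  simp

lemma IsHermitian.trace_aeval_eq_sum_eval_eigenvalues {n 𝕜 : Type*} [Fintype n] [DecidableEq n]
    [RCLike 𝕜] {A : Matrix n n 𝕜} (hA : A.IsHermitian) (p : 𝕜[X]) :
    (aeval A p).trace = ∑ i, p.eval (hA.eigenvalues i : 𝕜) := by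
  conv_lhs => rw [hA.spectral_theorem]
  rw [aeval_algHom_apply, Unitary.conjStarAlgAut_apply, trace_mul_cycle,
    Unitary.coe_star_mul_self, one_mul, aeval_diagonal, trace_diagonal]
  rfl

section Spectrum

variable {n K : Type*} [Fintype n] [DecidableEq n] [Field K] {A : Matrix n n K} {μ : K}

lemma mem_spectrum_of_mulVec_eq_smul {v : n → K} (hv : v ≠ 0) (h : A *ᵥ v = μ • v) :
    μ ∈ spectrum K A := by
  rw [← spectrum_toLin', ← Module.End.hasEigenvalue_iff_mem_spectrum]
  exact Module.End.hasEigenvalue_of_hasEigenvector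
    ⟨Module.End.mem_eigenspace_iff.mpr (by rwa [toLin'_apply]), hv⟩

lemma exists_mulVec_eq_smul_of_mem_spectrum (hμ : μ ∈ spectrum K A) :
    ∃ v ≠ 0, A *ᵥ v = μ • v := by
  rw [← spectrum_toLin', ← Module.End.hasEigenvalue_iff_mem_spectrum] at hμ
  obtain ⟨v, hv⟩ := hμ.exists_hasEigenvector
  exact ⟨v, hv.2, by rw [← toLin'_apply]; exact Module.End.mem_eigenspace_iff.mp hv.1⟩

lemma eq_zero_or_mem_range_of_mul_self_eq_diagonal_mul {d : n → K}
    (h : A * A = diagonal d * A) (hμ : μ ∈ spectrum K A) : μ = 0 ∨ μ ∈ Set.range d := by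
  obtain ⟨v, hv, hAv⟩ := exists_mulVec_eq_smul_of_mem_spectrum hμ
  refine or_iff_not_imp_left.mpr fun hμ0 => ?_
  have hdv : μ • (diagonal d *ᵥ v) = μ • (μ • v) := by
    rw [← mulVec_smul, ← hAv, mulVec_mulVec, ← h, ← mulVec_mulVec, hAv, mulVec_smul, hAv]
  rw [← spectrum_diagonal]
  exact mem_spectrum_of_mulVec_eq_smul hv (smul_right_injective _ hμ0 hdv)

end Spectrum

section BlockDiagConst

variable (α β : Type*) {R : Type*} [Fintype α] [Fintype β] [CommSemiring R]

def blockDiagConst (c : R) : Matrix (α ⊕ β) (α ⊕ β) R :=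
  fromBlocks (of fun _ _ => c) 0 0 (of fun _ _ => c)

variable {α β}

lemma blockDiagConst_mul_self [DecidableEq α] [DecidableEq β] (c : R) :
    blockDiagConst α β c * blockDiagConst α β c =
      diagonal (Sum.elim (fun _ => c * Fintype.card α) (fun _ => c * Fintype.card β)) *
        blockDiagConst α β c := by
  ext (a | b) (a' | b') <;> rw [diagonal_mul] <;>
    simp only [blockDiagConst, mul_apply, Fintype.sum_sum_type, fromBlocks_apply₁₁,
      fromBlocks_apply₁₂, fromBlocks_apply₂₁, fromBlocks_apply₂₂, of_apply, zero_apply, sum_const,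
      card_univ, nsmul_eq_mul, mul_zero, zero_mul, add_zero, zero_add,
      Sum.elim_inl, Sum.elim_inr] <;> ring

lemma blockDiagConst_mulVec_inl (c : R) :
    blockDiagConst α β c *ᵥ Sum.elim 1 (0 : β → R) =
      (c * Fintype.card α) • Sum.elim (1 : α → R) 0 := by
  ext (a | b) <;> simp [blockDiagConst, mulVec, dotProduct, mul_comm]

lemma blockDiagConst_mulVec_inr (c : R) :
    blockDiagConst α β c *ᵥ Sum.elim (0 : α → R) 1 =
      (c * Fintype.card β) • Sum.elim (0 : α → R) 1 := by
  ext (a | b) <;> simp [blockDiagConst, mulVec, dotProduct, mul_comm]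

lemma trace_blockDiagConst (c : R) :
    (blockDiagConst α β c).trace = c * Fintype.card α + c * Fintype.card β := by
  simp [blockDiagConst, trace, mul_comm]

lemma trace_blockDiagConst_sq [DecidableEq α] [DecidableEq β] (c : R) :
    (blockDiagConst α β c ^ 2).trace = (c * Fintype.card α) ^ 2 + (c * Fintype.card β) ^ 2 := by
  simp only [trace, blockDiagConst, sq, diag_apply, mul_apply, Fintype.sum_sum_type,
    fromBlocks_apply₁₁, fromBlocks_apply₁₂, fromBlocks_apply₂₁, fromBlocks_apply₂₂, of_apply,
    zero_apply, sum_const, card_univ, nsmul_eq_mul, mul_zero, add_zero, zero_add]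
  ring

end BlockDiagConst

end Matrix

lemma card_filter_ne_zero_eq_two {ι K : Type*} [Fintype ι] [Field K] [CharZero K] [DecidableEq K]
    {g : ι → K} {a b : K} (ha : a ≠ 0) (hb : b ≠ 0) (hg : ∀ i, g i = 0 ∨ g i = a ∨ g i = b)
    (hsum : ∑ i, g i = a + b) (hsq : ∑ i, g i ^ 2 = a ^ 2 + b ^ 2) :
    #{i | g i ≠ 0} = 2 := by
  -- `x² - (a + b) x + a b` vanishes at `a` and `b`, so summing gives `a b · #{g ≠ 0} = 2 a b`.
  have hpt : ∀ i, g i ^ 2 - (a + b) * g i + a * b * (if g i ≠ 0 then 1 else 0) = 0 := by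
    intro i
    rcases hg i with h | h | h <;>
      simp only [h, ne_eq, ha, hb, OfNat.ofNat_ne_zero, not_false_eq_true, not_true_eq_false,
        ↓reduceIte, zero_pow, mul_zero, mul_one, sub_self, add_zero] <;> ring
  have htot := Finset.sum_eq_zero (s := univ) fun i _ => hpt i
  rw [sum_add_distrib, sum_sub_distrib, ← mul_sum, ← mul_sum, sum_boole, hsum, hsq] at htot
  have hcard : (#{i | g i ≠ 0} : K) = 2 :=
    mul_left_cancel₀ (mul_ne_zero ha hb) (by linear_combination htot)
  exact_mod_cast hcard

namespace SimpleGraph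

lemma dist_eq_two_of_adj_of_adj {V : Type*} {G : SimpleGraph V} {u v w : V} (hne : u ≠ v)
    (hnadj : ¬G.Adj u v) (huw : G.Adj u w) (hwv : G.Adj w v) : G.dist u v = 2 := by
  have hle := dist_le (huw.toWalk.append hwv.toWalk)
  have hlt := (huw.reachable.trans hwv.reachable).one_lt_dist_of_ne_of_not_adj hne hnadj
  simp only [Walk.length_append, Adj.length_toWalk] at hle
  omega

variable {α β : Type*}

lemma completeBipartiteGraph_dist_of_ne [Nonempty α] [Nonempty β] {u v : α ⊕ β} (huv : u ≠ v) :
    (completeBipartiteGraph α β).dist u v = if u.isLeft = v.isLeft then 2 else 1 := by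
  obtain ⟨a₀⟩ := ‹Nonempty α›
  obtain ⟨b₀⟩ := ‹Nonempty β›
  rcases u with a | b <;> rcases v with a' | b' <;>
    simp only [Sum.isLeft_inl, Sum.isLeft_inr, Bool.true_eq_false, Bool.false_eq_true, ↓reduceIte]
  · exact dist_eq_two_of_adj_of_adj huv (by simp) (w := .inr b₀) (by simp) (by simp)
  · exact dist_eq_one_iff_adj.mpr (by simp)
  · exact dist_eq_one_iff_adj.mpr (by simp)
  · exact dist_eq_two_of_adj_of_adj huv (by simp) (w := .inl a₀) (by simp) (by simp)

lemma ecc_completeBipartiteGraph [Fintype α] [Fintype β] [Nontrivial α] [Nontrivial β]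
    (u : α ⊕ β) : ecc (completeBipartiteGraph α β) u = 2 := by
  have hle : ecc (completeBipartiteGraph α β) u ≤ 2 := by
    refine Finset.sup_le fun v _ => ?_
    rcases eq_or_ne u v with rfl | huv
    · simp
    · rw [completeBipartiteGraph_dist_of_ne huv]; split_ifs <;> omega
  obtain ⟨v, huv, hside⟩ : ∃ v : α ⊕ β, u ≠ v ∧ u.isLeft = v.isLeft := by
    rcases u with a | b
    · obtain ⟨a', h⟩ := exists_ne a
      exact ⟨.inl a', by simpa using h.symm, rfl⟩
    · obtain ⟨b', h⟩ := exists_ne b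
      exact ⟨.inr b', by simpa using h.symm, rfl⟩
  have hge := Finset.le_sup (f := (completeBipartiteGraph α β).dist u) (Finset.mem_univ v)
  rw [completeBipartiteGraph_dist_of_ne huv, if_pos hside] at hge
  exact le_antisymm hle hge

end SimpleGraph

section CompleteBipartite

open SimpleGraph

variable {α β : Type*} [Fintype α] [Fintype β] [DecidableEq α] [DecidableEq β]
  [Nontrivial α] [Nontrivial β]

lemma eccMatrix_completeBipartiteGraph_add_two :
    eccMatrix (completeBipartiteGraph α β) + 2 = blockDiagConst α β 2 := by
  ext u v
  rw [Matrix.add_apply]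
  rcases eq_or_ne u v with rfl | huv
  · rcases u with a | b <;> simp [eccMatrix, blockDiagConst, ofNat_apply]
  · simp only [eccMatrix, ecc_completeBipartiteGraph, completeBipartiteGraph_dist_of_ne huv,
      min_self]
    rcases u with a | b <;> rcases v with a' | b' <;> simp [blockDiagConst, ofNat_apply, huv]

lemma mem_spectrum_eccMatrix_completeBipartiteGraph_iff {μ : ℝ} :
    μ ∈ spectrum ℝ (eccMatrix (completeBipartiteGraph α β)) ↔
      μ + 2 ∈ spectrum ℝ (blockDiagConst α β (2 : ℝ)) := by
  rw [← eccMatrix_completeBipartiteGraph_add_two, add_comm _ 2,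
    ← map_ofNat (algebraMap ℝ (Matrix (α ⊕ β) (α ⊕ β) ℝ)) 2, spectrum.add_mem_add_iff]

lemma add_two_eq_of_mem_spectrum_eccMatrix_completeBipartiteGraph {μ : ℝ}
    (hμ : μ ∈ spectrum ℝ (eccMatrix (completeBipartiteGraph α β))) :
    μ + 2 = 0 ∨ μ + 2 = 2 * Fintype.card α ∨ μ + 2 = 2 * Fintype.card β := by
  rw [mem_spectrum_eccMatrix_completeBipartiteGraph_iff] at hμ
  rcases eq_zero_or_mem_range_of_mul_self_eq_diagonal_mul (blockDiagConst_mul_self 2) hμ with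
    h | ⟨a | b, h⟩
  exacts [Or.inl h, Or.inr (Or.inl h.symm), Or.inr (Or.inr h.symm)]

lemma two_mul_card_sub_one_mem_spectrum_eccMatrix_completeBipartiteGraph :
    2 * ((Fintype.card α : ℝ) - 1) ∈ spectrum ℝ (eccMatrix (completeBipartiteGraph α β)) ∧
      2 * ((Fintype.card β : ℝ) - 1) ∈ spectrum ℝ (eccMatrix (completeBipartiteGraph α β)) := by
  obtain ⟨a⟩ := ‹Nontrivial α›.to_nonempty
  obtain ⟨b⟩ := ‹Nontrivial β›.to_nonempty
  simp only [mem_spectrum_eccMatrix_completeBipartiteGraph_iff, mul_sub, mul_one, sub_add_cancel]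
  constructor
  · refine mem_spectrum_of_mulVec_eq_smul (fun h => ?_) (blockDiagConst_mulVec_inl 2)
    simpa using congrFun h (.inl a)
  · refine mem_spectrum_of_mulVec_eq_smul (fun h => ?_) (blockDiagConst_mulVec_inr 2)
    simpa using congrFun h (.inr b)

lemma sum_eigenvalues_add_two_eccMatrix_completeBipartiteGraph :
    let hM := eccMatrix_isHermitian (completeBipartiteGraph α β)
    ∑ i, (hM.eigenvalues i + 2) = 2 * Fintype.card α + 2 * Fintype.card β ∧
      ∑ i, (hM.eigenvalues i + 2) ^ 2 =
        (2 * Fintype.card α : ℝ) ^ 2 + (2 * Fintype.card β) ^ 2 := by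
  intro hM
  have hsum := hM.trace_aeval_eq_sum_eval_eigenvalues (X + 2)
  have hsq := hM.trace_aeval_eq_sum_eval_eigenvalues ((X + 2) ^ 2)
  simp only [map_pow, map_add, aeval_X, map_ofNat, eccMatrix_completeBipartiteGraph_add_two,
    trace_blockDiagConst, trace_blockDiagConst_sq, eval_pow, eval_add, eval_X, eval_ofNat]
    at hsum hsq
  exact ⟨hsum.symm, hsq.symm⟩

lemma posEigCount_eccMatrix_completeBipartiteGraph :
    posEigCount (eccMatrix_isHermitian (completeBipartiteGraph α β)) = 2 := by
  set hM := eccMatrix_isHermitian (completeBipartiteGraph α β)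
  have hα : (2 : ℝ) ≤ Fintype.card α := by exact_mod_cast Fintype.one_lt_card (α := α)
  have hβ : (2 : ℝ) ≤ Fintype.card β := by exact_mod_cast Fintype.one_lt_card (α := β)
  have hcases (i) := add_two_eq_of_mem_spectrum_eccMatrix_completeBipartiteGraph
    (hM.eigenvalues_mem_spectrum_real i)
  obtain ⟨hsum, hsq⟩ := sum_eigenvalues_add_two_eccMatrix_completeBipartiteGraph (α := α) (β := β)
  rw [posEigCount, ← card_filter_ne_zero_eq_two (by positivity) (by positivity) hcases hsum hsq]
  congr 1
  refine filter_congr fun i _ => ?_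
  rw [ne_eq, ← not_iff_not, not_not, not_lt]
  rcases hcases i with h | h | h <;> constructor <;> intro <;> linarith

end CompleteBipartite

/-- for `r₁, r₂ ≥ 2` the complete bipartite graph `K_{r₁,r₂}` has exactly two
positive eccentricity eigenvalues, namely `2(r₁-1)` and `2(r₂-1)`. -/
theorem stmt6 (r₁ r₂ : ℕ) (h1 : 2 ≤ r₁) (h2 : 2 ≤ r₂) :
    posEigCount (eccMatrix_isHermitian (completeBipartiteGraph (Fin r₁) (Fin r₂))) = 2 ∧
    (2 * ((r₁ : ℝ) - 1)) ∈ spectrum ℝ (eccMatrix (completeBipartiteGraph (Fin r₁) (Fin r₂))) ∧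
    (2 * ((r₂ : ℝ) - 1)) ∈ spectrum ℝ (eccMatrix (completeBipartiteGraph (Fin r₁) (Fin r₂))) := by
  have : Nontrivial (Fin r₁) := Fin.nontrivial_iff_two_le.mpr h1
  have : Nontrivial (Fin r₂) := Fin.nontrivial_iff_two_le.mpr h2
  refine ⟨posEigCount_eccMatrix_completeBipartiteGraph, ?_⟩
  simpa only [Fintype.card_fin] using
    two_mul_card_sub_one_mem_spectrum_eccMatrix_completeBipartiteGraph (α := Fin r₁) (β := Fin r₂)
end

section
/- Let r₁, r₂, r₃ ≥ 1 and let H₁ be the join of the complete graph K_{r₁} with the disjoint union K_{r₂} ⊔ K_{r₃}. Then the characteristic polynomial of ε(H₁) equals x^{r₂+r₃−2}·(x+1)^{r₁−1}·(x³ − (r₁−1)x² − (r₁r₂ + r₁r₃ + 4r₂r₃)x − 4r₂r₃). -/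
open Finset Polynomial

/-!
Distances in `H₁` are at most `2` and depend only on which of the three cliques the endpoints
lie in, so `ε(H₁)` is the blow-up of the pattern `M = [[1,1,1],[1,0,2],[1,2,0]]` along the
partition into cliques, with its diagonal cleared. For such a blow-up, `xI - ε = D - U M Uᵀ` with
`D` diagonal and `U` the incidence matrix of the partition, and the matrix determinant lemma over
`ℝ(x)` turns `det (xI - ε)` into `∏ (x + M i i) ^ (n i - 1)` times the characteristic polynomial
of the `3 × 3` quotient matrix `diag(n) M - diag(M i i)`.
-/

open Matrix

theorem SimpleGraph.dist_eq_two_of_not_adj {V : Type*} {G : SimpleGraph V} {u v w : V}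
    (huv : u ≠ v) (h : ¬G.Adj u v) (huw : G.Adj u w) (hwv : G.Adj w v) : G.dist u v = 2 := by
  rw [SimpleGraph.dist, SimpleGraph.edist_eq_two_iff.mpr ⟨huv, h, w, huw, hwv.symm⟩]
  rfl

theorem ecc_eq_of_forall_dist_le {V : Type*} [Fintype V] {G : SimpleGraph V} {u w : V} {k : ℕ}
    (hle : ∀ v, G.dist u v ≤ k) (hw : G.dist u w = k) : ecc G u = k :=
  le_antisymm (Finset.sup_le fun v _ => hle v) (hw ▸ Finset.le_sup (Finset.mem_univ w))

def eccPattern {ι : Type*} (D : Matrix ι ι ℕ) (e : ι → ℕ) : Matrix ι ι ℝ :=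
  of fun i j => if D i j = min (e i) (e j) then (D i j : ℝ) else 0

theorem eccMatrix_eq_submatrix_sub_diagonal {V ι : Type*} [Fintype V] [DecidableEq V]
    {G : SimpleGraph V} (b : V → ι) (D : Matrix ι ι ℕ) (e : ι → ℕ)
    (hdist : ∀ u v, u ≠ v → G.dist u v = D (b u) (b v)) (hecc : ∀ u, ecc G u = e (b u)) :
    eccMatrix G =
      (eccPattern D e).submatrix b b - diagonal fun u => eccPattern D e (b u) (b u) := by
  ext u v
  by_cases huv : u = v
  · subst huv
    simp [eccMatrix]
  · simp [eccMatrix, eccPattern, hdist u v huv, hecc, huv]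

theorem Fintype.prod_comp_eq_prod_pow_card {M V ι : Type*} [CommMonoid M] [Fintype V] [Fintype ι]
    [DecidableEq ι] (b : V → ι) (f : ι → M) :
    ∏ u, f (b u) = ∏ i, f i ^ #{u | b u = i} := by
  rw [← Finset.prod_fiberwise' univ b f]
  simp

theorem RatFunc.X_add_C_ne_zero {K : Type*} [Field K] (c : K) : RatFunc.X + RatFunc.C c ≠ 0 := by
  rw [← RatFunc.algebraMap_X, ← RatFunc.algebraMap_C, ← map_add]
  exact RatFunc.algebraMap_ne_zero (Polynomial.X_add_C_ne_zero c)

namespace Matrix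

variable {R K V ι : Type*} [DecidableEq ι]

theorem submatrix_eq_mul_mul_transpose [NonAssocSemiring R] [Fintype ι] (b : V → ι)
    (M : Matrix ι ι R) :
    M.submatrix b b =
      (1 : Matrix ι ι R).submatrix b id * M * ((1 : Matrix ι ι R).submatrix b id)ᵀ := by
  ext u v
  simp [Matrix.mul_apply, Matrix.one_apply]

theorem transpose_mul_diagonal_mul_submatrix_one [NonAssocSemiring R] [Fintype V] [DecidableEq V]
    (b : V → ι) (d : V → R) :
    ((1 : Matrix ι ι R).submatrix b id)ᵀ * diagonal d * (1 : Matrix ι ι R).submatrix b id =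
      diagonal fun i => ∑ u with b u = i, d u := by
  ext i j
  rw [Matrix.mul_apply, diagonal_apply]
  simp only [mul_diagonal, transpose_apply, submatrix_apply, id, one_apply, mul_ite, mul_one,
    mul_zero, ite_mul, one_mul, zero_mul]
  split_ifs with hij
  · subst hij
    rw [Finset.sum_filter]
    exact Finset.sum_congr rfl fun u _ => by split_ifs <;> rfl
  · exact Finset.sum_eq_zero fun u _ => by split_ifs <;> simp_all

theorem det_diagonal_comp_sub_submatrix [Field K] [Fintype V] [DecidableEq V] [Fintype ι]
    {b : V → ι} (hb : Function.Surjective b) (δ : ι → K) (hδ : ∀ i, δ i ≠ 0)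
    (M : Matrix ι ι K) :
    (diagonal (δ ∘ b) - M.submatrix b b).det =
      (∏ i, δ i ^ (#{u | b u = i} - 1)) *
        (diagonal δ - diagonal (fun i => (#{u | b u = i} : K)) * M).det := by
  set P : Matrix V ι K := (1 : Matrix ι ι K).submatrix b id
  set n : ι → K := fun i => (#{u | b u = i} : K)
  have hA : IsUnit (diagonal (δ ∘ b)).det := by
    simp [isUnit_iff_ne_zero, Finset.prod_ne_zero_iff, hδ]
  have hinv : (diagonal (δ ∘ b))⁻¹ = diagonal fun u => (δ (b u))⁻¹ :=
    inv_eq_left_inv (by simp [diagonal_mul_diagonal, hδ])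
  have hgram : Pᵀ * (diagonal (δ ∘ b))⁻¹ * P = diagonal fun i => (δ i)⁻¹ * n i := by
    rw [hinv, transpose_mul_diagonal_mul_submatrix_one]
    congr 1
    ext i
    rw [Finset.sum_congr rfl fun u hu => by rw [(mem_filter.1 hu).2], sum_const, nsmul_eq_mul,
      mul_comm]
  have hfactor : 1 + Pᵀ * (diagonal (δ ∘ b))⁻¹ * -(P * M) =
      diagonal (fun i => (δ i)⁻¹) * (diagonal δ - diagonal n * M) := by
    have hcancel : (fun i => (δ i)⁻¹ * δ i) = fun _ => 1 :=
      funext fun i => inv_mul_cancel₀ (hδ i)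
    rw [Matrix.mul_neg, ← Matrix.mul_assoc, hgram, Matrix.mul_sub, ← Matrix.mul_assoc,
      diagonal_mul_diagonal, diagonal_mul_diagonal, hcancel, diagonal_one, ← sub_eq_add_neg]
  rw [submatrix_eq_mul_mul_transpose, sub_eq_add_neg, ← Matrix.neg_mul, det_add_mul _ _ hA,
    hfactor, det_mul, ← mul_assoc, det_diagonal, det_diagonal, Function.comp_def,
    Fintype.prod_comp_eq_prod_pow_card, ← prod_mul_distrib]
  congr 1
  refine Finset.prod_congr rfl fun i _ => ?_
  obtain ⟨u, rfl⟩ := hb i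
  rw [pow_sub₀ _ (hδ _) (Finset.card_pos.mpr ⟨u, by simp⟩), pow_one]

theorem charmatrix_sub_diagonal_map_algebraMap [Field K] [Fintype V] [DecidableEq V]
    (N : Matrix V V K) (d : V → K) :
    (charmatrix (N - diagonal d)).map (algebraMap K[X] (RatFunc K)) =
      diagonal (fun i => RatFunc.X + RatFunc.C (d i)) - N.map RatFunc.C := by
  ext i j
  by_cases h : i = j
  · subst h
    simp only [map_apply, charmatrix_apply_eq, Matrix.sub_apply, diagonal_apply_eq, map_sub,
      RatFunc.algebraMap_X, RatFunc.algebraMap_C]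
    ring
  · simp [h, charmatrix_apply_ne]

theorem charpoly_submatrix_sub_diagonal [Field K] [Fintype V] [DecidableEq V] [Fintype ι]
    {b : V → ι} (hb : Function.Surjective b) (M : Matrix ι ι K) :
    (M.submatrix b b - diagonal fun u => M (b u) (b u)).charpoly =
      (∏ i, (X + C (M i i)) ^ (#{u | b u = i} - 1)) *
        (diagonal (fun i => (#{u | b u = i} : K)) * M - diagonal fun i => M i i).charpoly := by
  apply RatFunc.algebraMap_injective K
  simp only [charpoly, RingHom.map_det, RingHom.mapMatrix_apply,
    charmatrix_sub_diagonal_map_algebraMap, map_mul, map_prod, map_pow, map_add,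
    RatFunc.algebraMap_X, RatFunc.algebraMap_C, ← submatrix_map, Matrix.map_mul,
    diagonal_map (map_zero _), map_natCast]
  exact det_diagonal_comp_sub_submatrix hb (fun i => RatFunc.X + RatFunc.C (M i i))
    (fun i => RatFunc.X_add_C_ne_zero _) _

end Matrix

abbrev H₁ (r₁ r₂ r₃ : ℕ) : SimpleGraph (Fin r₁ ⊕ (Fin r₂ ⊕ Fin r₃)) :=
  graphJoin (⊤ : SimpleGraph (Fin r₁))
    (graphSum (⊤ : SimpleGraph (Fin r₂)) (⊤ : SimpleGraph (Fin r₃)))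

namespace H₁

variable {r₁ r₂ r₃ : ℕ}

def part : Fin r₁ ⊕ (Fin r₂ ⊕ Fin r₃) → Fin 3
  | .inl _ => 0
  | .inr (.inl _) => 1
  | .inr (.inr _) => 2

def distPattern : Matrix (Fin 3) (Fin 3) ℕ := !![1, 1, 1; 1, 1, 2; 1, 2, 1]

def eccVector : Fin 3 → ℕ := ![1, 2, 2]

theorem dist_eq (h₁ : 1 ≤ r₁) {u v : Fin r₁ ⊕ (Fin r₂ ⊕ Fin r₃)} (huv : u ≠ v) :
    (H₁ r₁ r₂ r₃).dist u v = distPattern (part u) (part v) := by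
  rcases u with a | a | a <;> rcases v with b | b | b
  case inr.inl.inr.inr | inr.inr.inr.inl =>
    exact SimpleGraph.dist_eq_two_of_not_adj (w := .inl ⟨0, h₁⟩) huv id trivial trivial
  all_goals
    refine (SimpleGraph.dist_eq_one_iff_adj.mpr ?_).trans rfl
    first | trivial | exact fun h => huv (h ▸ rfl)

theorem distPattern_le_eccVector (i j : Fin 3) : distPattern i j ≤ eccVector i := by
  fin_cases i <;> fin_cases j <;> simp [distPattern, eccVector]

theorem ecc_eq (h₁ : 1 ≤ r₁) (h₂ : 1 ≤ r₂) (h₃ : 1 ≤ r₃) (u : Fin r₁ ⊕ (Fin r₂ ⊕ Fin r₃)) :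
    ecc (H₁ r₁ r₂ r₃) u = eccVector (part u) := by
  have hle (v) : (H₁ r₁ r₂ r₃).dist u v ≤ eccVector (part u) := by
    rcases eq_or_ne u v with rfl | huv
    · simp
    · exact (dist_eq h₁ huv).trans_le (distPattern_le_eccVector _ _)
  rcases u with a | a | a
  · exact ecc_eq_of_forall_dist_le (w := .inr (.inl ⟨0, h₂⟩)) hle (dist_eq h₁ (by simp))
  · exact ecc_eq_of_forall_dist_le (w := .inr (.inr ⟨0, h₃⟩)) hle (dist_eq h₁ (by simp))
  · exact ecc_eq_of_forall_dist_le (w := .inr (.inl ⟨0, h₂⟩)) hle (dist_eq h₁ (by simp))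

theorem part_surjective (h₁ : 1 ≤ r₁) (h₂ : 1 ≤ r₂) (h₃ : 1 ≤ r₃) :
    Function.Surjective (part : Fin r₁ ⊕ (Fin r₂ ⊕ Fin r₃) → Fin 3) := by
  intro i
  fin_cases i
  exacts [⟨.inl ⟨0, h₁⟩, rfl⟩, ⟨.inr (.inl ⟨0, h₂⟩), rfl⟩, ⟨.inr (.inr ⟨0, h₃⟩), rfl⟩]

theorem card_part (i : Fin 3) :
    #{u : Fin r₁ ⊕ (Fin r₂ ⊕ Fin r₃) | part u = i} = ![r₁, r₂, r₃] i := by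
  rw [Finset.card_filter, Fintype.sum_sum_type, Fintype.sum_sum_type]
  fin_cases i <;> simp [part]

theorem eccPattern_eq : eccPattern distPattern eccVector = !![1, 1, 1; 1, 0, 2; 1, 2, 0] := by
  ext i j
  fin_cases i <;> fin_cases j <;> simp [eccPattern, distPattern, eccVector]

theorem quotientMatrix_eq :
    (diagonal fun i => (#{u : Fin r₁ ⊕ (Fin r₂ ⊕ Fin r₃) | part u = i} : ℝ)) *
        eccPattern distPattern eccVector - diagonal (fun i => eccPattern distPattern eccVector i i) =
      !![(r₁ : ℝ) - 1, r₁, r₁; r₂, 0, 2 * r₂; r₃, 2 * r₃, 0] := by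
  rw [eccPattern_eq]
  ext i j
  fin_cases i <;> fin_cases j <;> simp [card_part, mul_comm]

theorem charpoly_quotientMatrix :
    (!![(r₁ : ℝ) - 1, r₁, r₁; r₂, 0, 2 * r₂; r₃, 2 * r₃, 0]).charpoly =
      X ^ 3 - C ((r₁ : ℝ) - 1) * X ^ 2
        - C ((r₁ : ℝ) * r₂ + r₁ * r₃ + 4 * r₂ * r₃) * X - C (4 * (r₂ : ℝ) * r₃) := by
  rw [charpoly, det_fin_three]
  simp only [charmatrix_apply_eq, charmatrix_apply_ne, of_apply, cons_val', cons_val_zero,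
    cons_val_one, cons_val_fin_one, Matrix.cons_val, ne_eq, Fin.reduceEq, not_false_eq_true,
    map_add, map_sub, map_mul, map_natCast, map_one, map_zero, map_ofNat]
  ring

end H₁

/-- the characteristic polynomial of the eccentricity matrix of the join of
`K_{r₁}` with `K_{r₂} ⊔ K_{r₃}`. -/
theorem stmt10 (r₁ r₂ r₃ : ℕ) (h1 : 1 ≤ r₁) (h2 : 1 ≤ r₂) (h3 : 1 ≤ r₃) :
    (eccMatrix (graphJoin (⊤ : SimpleGraph (Fin r₁))
        (graphSum (⊤ : SimpleGraph (Fin r₂)) (⊤ : SimpleGraph (Fin r₃))))).charpoly =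
      X ^ (r₂ + r₃ - 2) * (X + C 1) ^ (r₁ - 1) *
        (X ^ 3 - C ((r₁ : ℝ) - 1) * X ^ 2
          - C ((r₁ : ℝ) * (r₂ : ℝ) + (r₁ : ℝ) * (r₃ : ℝ) + 4 * (r₂ : ℝ) * (r₃ : ℝ)) * X
          - C (4 * (r₂ : ℝ) * (r₃ : ℝ))) := by
  rw [eccMatrix_eq_submatrix_sub_diagonal H₁.part H₁.distPattern H₁.eccVector
      (fun _ _ => H₁.dist_eq h1) (H₁.ecc_eq h1 h2 h3),
    charpoly_submatrix_sub_diagonal (H₁.part_surjective h1 h2 h3), H₁.quotientMatrix_eq,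
    H₁.charpoly_quotientMatrix, show r₂ + r₃ - 2 = (r₂ - 1) + (r₃ - 1) by omega, pow_add]
  simp only [Fin.prod_univ_three, H₁.card_part, H₁.eccPattern_eq, of_apply, cons_val',
    cons_val_fin_one, cons_val_zero, cons_val_one, Matrix.cons_val, map_zero, add_zero]
  ring
end

section
/- Let k ≥ 4 and r₂, r₃, …, r_k ≥ 1, and let H be the join of a single vertex with the disjoint union of the empty graph on r₂ vertices and the complete graphs K_{r₃}, …, K_{r_k}. Then the eccentricity matrix ε(H) has exactly one positive eigenvalue. -/
open Finset Polynomial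

/-!
Outside the apex every vertex has a non-neighbour, so the apex has eccentricity 1 and every other
vertex eccentricity 2. Hence `ε(H)` has zero diagonal, entries 1 between the apex and the other
vertices, and entries 2 between vertices lying in different clusters, where each clique is a
cluster and each vertex of the coclique is a cluster of its own. Being nonzero of trace 0, `ε(H)`
has a positive eigenvalue. On the hyperplane `x_apex + 2 ∑ x_leaf = 0` its quadratic form is
`-2 (∑ x_leaf)² - 2 ∑_C (∑_{v ∈ C} x_v)² ≤ 0`; since the plane spanned by two eigenvectors with
positive eigenvalues would meet this hyperplane, there is at most one positive eigenvalue.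
-/

namespace Matrix.IsHermitian

variable {n : Type*} [Fintype n] [DecidableEq n] {A : Matrix n n ℝ} (hA : A.IsHermitian)
include hA

theorem zero_lt_posEigCount_of_trace_eq_zero (htr : A.trace = 0) (hA0 : A ≠ 0) :
    0 < posEigCount hA := by
  by_contra! h
  have hnonpos : ∀ i, hA.eigenvalues i ≤ 0 := by
    simpa [posEigCount, filter_eq_empty_iff] using h
  have hsum : ∑ i, hA.eigenvalues i = 0 := by
    simpa [htr] using hA.trace_eq_sum_eigenvalues.symm
  refine hA0 (hA.eigenvalues_eq_zero_iff.mp (funext fun i => ?_))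
  exact (sum_eq_zero_iff_of_nonpos fun j _ => hnonpos j).mp hsum i (mem_univ i)

theorem dotProduct_eigenvectorBasis (i j : n) :
    (hA.eigenvectorBasis i : n → ℝ) ⬝ᵥ hA.eigenvectorBasis j = if i = j then 1 else 0 := by
  rw [← orthonormal_iff_ite.mp hA.eigenvectorBasis.orthonormal i j,
    EuclideanSpace.inner_eq_star_dotProduct, dotProduct_comm]
  rfl

theorem dotProduct_mulVec_eigenvector_combination {i j : n} (hij : i ≠ j) (a b : ℝ) :
    let z : n → ℝ := a • ⇑(hA.eigenvectorBasis i) + b • ⇑(hA.eigenvectorBasis j)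
    z ⬝ᵥ A *ᵥ z = a ^ 2 * hA.eigenvalues i + b ^ 2 * hA.eigenvalues j := by
  simp only [mulVec_add, mulVec_smul, hA.mulVec_eigenvectorBasis, dotProduct_add, add_dotProduct,
    smul_dotProduct, dotProduct_smul, hA.dotProduct_eigenvectorBasis, if_neg hij,
    if_neg hij.symm, smul_eq_mul, if_pos, mul_one, mul_zero, add_zero, zero_add]
  ring

theorem posEigCount_le_one_of_dotProduct_mulVec_nonpos (f : n → ℝ)
    (hf : ∀ x, f ⬝ᵥ x = 0 → x ⬝ᵥ A *ᵥ x ≤ 0) : posEigCount hA ≤ 1 := by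
  by_contra! h
  obtain ⟨i, hi, j, hj, hij⟩ := one_lt_card.mp h
  simp only [mem_filter, mem_univ, true_and] at hi hj
  have hq := hA.dotProduct_mulVec_eigenvector_combination hij
  set v : n → ℝ := ⇑(hA.eigenvectorBasis i)
  set w : n → ℝ := ⇑(hA.eigenvectorBasis j)
  by_cases hfv : f ⬝ᵥ v = 0
  · have hv : v ⬝ᵥ A *ᵥ v = hA.eigenvalues i := by simpa using hq 1 0
    linarith [hf v hfv]
  · -- a nonzero vector of span {v, w} orthogonal to `f`
    have hz := hf ((f ⬝ᵥ w) • v + (-(f ⬝ᵥ v)) • w) (by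
      simp only [dotProduct_add, dotProduct_smul, smul_eq_mul]; ring)
    rw [hq] at hz
    nlinarith [mul_nonneg (sq_nonneg (f ⬝ᵥ w)) hi.le, mul_pos (pow_pos (abs_pos.mpr hfv) 2) hj,
      sq_abs (f ⬝ᵥ v)]

end Matrix.IsHermitian

theorem eccMatrix_apply_self {V : Type*} [Fintype V] (G : SimpleGraph V) (u : V) :
    eccMatrix G u u = 0 := by
  simp [eccMatrix]

theorem trace_eccMatrix {V : Type*} [Fintype V] (G : SimpleGraph V) : (eccMatrix G).trace = 0 :=
  sum_eq_zero fun u _ => eccMatrix_apply_self G u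

abbrev cone {β : Type*} (H : SimpleGraph β) : SimpleGraph (Unit ⊕ β) := graphJoin ⊤ H

section Cone

open SimpleGraph Sum

variable {β : Type*} (H : SimpleGraph β)

theorem cone_dist_inl_inr (u : Unit) (b : β) : (cone H).dist (inl u) (inr b) = 1 :=
  dist_eq_one_iff_adj.mpr trivial

theorem cone_dist_inr_inl (a : β) (u : Unit) : (cone H).dist (inr a) (inl u) = 1 :=
  dist_eq_one_iff_adj.mpr trivial

theorem cone_dist_inr_inr_le_two (a b : β) : (cone H).dist (inr a) (inr b) ≤ 2 :=
  dist_le ((show (cone H).Adj (inr a) (inl ()) from trivial).toWalk.append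
    (show (cone H).Adj (inl ()) (inr b) from trivial).toWalk)

theorem cone_dist_inr_inr_of_not_adj {a b : β} (hab : a ≠ b) (h : ¬ H.Adj a b) :
    (cone H).dist (inr a) (inr b) = 2 := by
  have hreach : (cone H).Reachable (inr a) (inr b) :=
    (show (cone H).Adj (inr a) (inl ()) from trivial).reachable.trans
      (show (cone H).Adj (inl ()) (inr b) from trivial).reachable
  have := hreach.one_lt_dist_of_ne_of_not_adj (by simpa using hab) h
  have := cone_dist_inr_inr_le_two H a b
  omega

variable [Fintype β]

theorem ecc_cone_inl [Nonempty β] (u : Unit) : ecc (cone H) (inl u) = 1 := by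
  refine le_antisymm (Finset.sup_le fun v _ => ?_) ?_
  · rcases v with w | b
    · simp [Subsingleton.elim u w]
    · exact (cone_dist_inl_inr H u b).le
  · obtain ⟨b⟩ := ‹Nonempty β›
    exact (cone_dist_inl_inr H u b).ge.trans (Finset.le_sup (mem_univ (inr b)))

theorem ecc_cone_inr {a : β} (h : ∃ b, b ≠ a ∧ ¬ H.Adj a b) : ecc (cone H) (inr a) = 2 := by
  refine le_antisymm (Finset.sup_le fun v _ => ?_) ?_
  · rcases v with u | b
    · simp [cone_dist_inr_inl]
    · exact cone_dist_inr_inr_le_two H a b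
  · obtain ⟨b, hba, hab⟩ := h
    exact (cone_dist_inr_inr_of_not_adj H hba.symm hab).ge.trans
      (Finset.le_sup (mem_univ (inr b)))

end Cone

theorem sum_sum_ite_apply_eq_mul_nonneg {β κ : Type*} [Fintype β] [DecidableEq κ]
    (c : β → κ) (y : β → ℝ) : 0 ≤ ∑ a, ∑ b, if c a = c b then y a * y b else 0 := by
  set g : κ → ℝ := fun k => ∑ b with c b = k, y b
  have hfiber :
      ∑ a, ∑ b, (if c a = c b then y a * y b else 0) = ∑ k ∈ univ.image c, g k * g k :=
    calc _ = ∑ a, y a * g (c a) := by simp [g, sum_filter, mul_sum, eq_comm]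
      _ = ∑ k ∈ univ.image c, ∑ a with c a = k, y a * g (c a) :=
        (sum_fiberwise_of_maps_to (fun a _ => mem_image_of_mem c (mem_univ a)) _).symm
      _ = ∑ k ∈ univ.image c, g k * g k := by
        refine sum_congr rfl fun k _ => ?_
        rw [sum_congr rfl fun a ha => by rw [(mem_filter.mp ha).2], ← sum_mul]
  exact hfiber ▸ sum_nonneg fun k _ => mul_self_nonneg (g k)

section ConeMatrix

open SimpleGraph Sum Matrix

variable {β : Type*} [Fintype β] {H : SimpleGraph β}

theorem eccMatrix_cone_inl_inr [Nonempty β] (hH : ∀ a, ∃ b, b ≠ a ∧ ¬ H.Adj a b)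
    (u : Unit) (b : β) : eccMatrix (cone H) (inl u) (inr b) = 1 := by
  simp [eccMatrix, cone_dist_inl_inr, ecc_cone_inl, ecc_cone_inr H (hH b)]

theorem eccMatrix_cone_inr_inl [Nonempty β] (hH : ∀ a, ∃ b, b ≠ a ∧ ¬ H.Adj a b) (a : β)
    (u : Unit) : eccMatrix (cone H) (inr a) (inl u) = 1 := by
  simp [eccMatrix, cone_dist_inr_inl, ecc_cone_inl, ecc_cone_inr H (hH a)]

variable {κ : Type*} [DecidableEq κ] {c : β → κ}
  (hH : ∀ a b, H.Adj a b ↔ a ≠ b ∧ c a = c b) (hc : ∀ a, ∃ b, c b ≠ c a)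
include hH hc

omit [Fintype β] [DecidableEq κ] in
theorem exists_ne_not_adj_of_cluster (a : β) : ∃ b, b ≠ a ∧ ¬ H.Adj a b := by
  obtain ⟨b, hb⟩ := hc a
  exact ⟨b, fun h => hb (h ▸ rfl), fun h => hb ((hH a b).mp h).2.symm⟩

theorem eccMatrix_cone_inr_inr (a b : β) :
    eccMatrix (cone H) (inr a) (inr b) = if c a = c b then 0 else 2 := by
  rw [eccMatrix, ecc_cone_inr H (exists_ne_not_adj_of_cluster hH hc a),
    ecc_cone_inr H (exists_ne_not_adj_of_cluster hH hc b), min_self]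
  by_cases hab : a = b
  · simp [hab]
  by_cases hadj : H.Adj a b
  · have hdist : (cone H).dist (inr a) (inr b) = 1 := dist_eq_one_iff_adj.mpr hadj
    simp [((hH a b).mp hadj).2, hdist]
  · have hcab : c a ≠ c b := fun h => hadj ((hH a b).mpr ⟨hab, h⟩)
    simp [hcab, cone_dist_inr_inr_of_not_adj H hab hadj]

theorem dotProduct_eccMatrix_cone_mulVec [Nonempty β] (x : Unit ⊕ β → ℝ) :
    x ⬝ᵥ eccMatrix (cone H) *ᵥ x =
      2 * x (inl ()) * ∑ b, x (inr b) + 2 * (∑ b, x (inr b)) ^ 2 -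
        2 * ∑ a, ∑ b, if c a = c b then x (inr a) * x (inr b) else 0 := by
  have hnu := exists_ne_not_adj_of_cluster hH hc
  have hrow : ∀ a, ∑ b, eccMatrix (cone H) (inr a) (inr b) * x (inr b)
      = 2 * ∑ b, x (inr b) - 2 * ∑ b, if c a = c b then x (inr b) else 0 := by
    intro a
    simp only [eccMatrix_cone_inr_inr hH hc, mul_sum, ← sum_sub_distrib]
    exact sum_congr rfl fun b _ => by split_ifs <;> ring
  have hleaves :
      ∑ a, x (inr a) * (2 * ∑ b, x (inr b) - 2 * ∑ b, if c a = c b then x (inr b) else 0) =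
        2 * (∑ b, x (inr b)) ^ 2 -
          2 * ∑ a, ∑ b, if c a = c b then x (inr a) * x (inr b) else 0 := by
    have hQ : ∀ a, x (inr a) * ∑ b, (if c a = c b then x (inr b) else 0)
        = ∑ b, if c a = c b then x (inr a) * x (inr b) else 0 := fun a => by
      simp only [mul_sum, mul_ite, mul_zero]
    simp only [mul_sub, mul_left_comm (x (inr _)) 2, sum_sub_distrib, ← mul_sum, hQ,
      sq, sum_mul]
  simp only [dotProduct, mulVec, Fintype.sum_sum_type, eccMatrix_apply_self,
    eccMatrix_cone_inl_inr hnu, eccMatrix_cone_inr_inl hnu, hrow, univ_unique,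
    sum_singleton, zero_mul, one_mul, mul_add, sum_add_distrib, hleaves]
  rw [← sum_mul]
  ring

end ConeMatrix

theorem posEigCount_eccMatrix_cone_of_cluster {β κ : Type*} [Fintype β] [DecidableEq β]
    [Nonempty β] {H : SimpleGraph β} (c : β → κ)
    (hH : ∀ a b, H.Adj a b ↔ a ≠ b ∧ c a = c b) (hc : ∀ a, ∃ b, c b ≠ c a) :
    posEigCount (eccMatrix_isHermitian (cone H)) = 1 := by
  classical
  refine le_antisymm ?_ ((eccMatrix_isHermitian _).zero_lt_posEigCount_of_trace_eq_zero
    (trace_eccMatrix _) ?_)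
  · refine (eccMatrix_isHermitian _).posEigCount_le_one_of_dotProduct_mulVec_nonpos
      (Sum.elim 1 fun _ => 2) fun x hx => ?_
    have hapex : x (Sum.inl ()) = -2 * ∑ b, x (Sum.inr b) := by
      simp only [dotProduct, Fintype.sum_sum_type, univ_unique, PUnit.default_eq_unit, Sum.elim_inl,
        Pi.one_apply, one_mul, sum_singleton, Sum.elim_inr, ← mul_sum] at hx
      linarith
    rw [dotProduct_eccMatrix_cone_mulVec hH hc, hapex]
    nlinarith [sum_sum_ite_apply_eq_mul_nonneg c fun b => x (Sum.inr b),
      sq_nonneg (∑ b, x (Sum.inr b))]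
  · obtain ⟨b⟩ := ‹Nonempty β›
    intro h0
    simpa [h0] using eccMatrix_cone_inl_inr (exists_ne_not_adj_of_cluster hH hc) () b

def blockCluster {ι : Type*} {r : ι → ℕ} (P : ι → Prop) [DecidablePred P]
    (x : Σ i, Fin (r i)) : ι ⊕ (Σ i, Fin (r i)) :=
  if P x.1 then .inl x.1 else .inr x

section Blocks

variable {ι : Type*} {r : ι → ℕ} {P : ι → Prop} [DecidablePred P]

theorem fst_eq_of_blockCluster_eq {x y : Σ i, Fin (r i)}
    (h : blockCluster P x = blockCluster P y) : x.1 = y.1 := by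
  unfold blockCluster at h
  split_ifs at h <;> simp_all

theorem blocksGraph_adj_iff (x y : Σ i, Fin (r i)) :
    (blocksGraph r P).Adj x y ↔ x ≠ y ∧ blockCluster P x = blockCluster P y := by
  change x ≠ y ∧ x.1 = y.1 ∧ P x.1 ↔ _
  unfold blockCluster
  by_cases hx : P x.1 <;> by_cases hy : P y.1 <;> simp only [hx, hy, if_true, if_false] <;> grind

end Blocks

theorem posEigCount_eccMatrix_cone_blocksGraph {ι : Type*} [Fintype ι] [DecidableEq ι]
    (r : ι → ℕ) (P : ι → Prop) {i j : ι} (hij : i ≠ j) (hi : 0 < r i) (hj : 0 < r j) :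
    posEigCount (eccMatrix_isHermitian (cone (blocksGraph r P))) = 1 := by
  classical
  have : Nonempty (Σ i, Fin (r i)) := ⟨⟨i, 0, hi⟩⟩
  refine posEigCount_eccMatrix_cone_of_cluster (blockCluster P) blocksGraph_adj_iff fun x => ?_
  by_cases hx : x.1 = i
  · exact ⟨⟨j, 0, hj⟩, fun h => hij (hx ▸ fst_eq_of_blockCluster_eq h).symm⟩
  · exact ⟨⟨i, 0, hi⟩, fun h => hx (fst_eq_of_blockCluster_eq h).symm⟩

/-- for `k ≥ 4`, the join of a single vertex with the disjoint union of a
coclique of size `r 0` and cliques of sizes `r 1, …, r (k-2)` (a mixed extension of `S_k`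
of type `(1, -r₂, r₃, …, r_k)`) has exactly one positive eccentricity eigenvalue. -/
theorem stmt13 (k : ℕ) (hk : 4 ≤ k) (r : Fin (k - 1) → ℕ) (hr : ∀ i, 1 ≤ r i) :
    posEigCount (eccMatrix_isHermitian (graphJoin (⊤ : SimpleGraph Unit)
      (blocksGraph r (fun i => (i : ℕ) ≠ 0)))) = 1 :=
  posEigCount_eccMatrix_cone_blocksGraph r _ (i := ⟨0, by omega⟩) (j := ⟨1, by omega⟩)
    (by simp) (hr _) (hr _)
end
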